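/- Let G ∈ F(Q_3) be a two-dimensional partial cube, isometrically embedded so that a maximal-by-inclusion convex full subdivision H = SK_n (n ≥ 4) of G is standardly embedded. Then the 1-extension G' obtained by adding the vertex ∅ to G is again a partial cube in F(Q_3), G is an isometric subgraph of G', and in G' the vertex ∅ is adjacent exactly to the n original vertices of H. -/

import Mathlib

open Finset

/-- The hypercube graph on subsets of `Fin m`. -/
def cubeGraph (m : ℕ) : SimpleGraph (Finset (Fin m)) where
  Adj A B := (symmDiff A B).card = 1
  symm := ⟨fun A B h => by show (symmDiff B A).card = 1; rwa [symmDiff_comm]⟩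
  loopless := ⟨fun A h => by simp only [symmDiff_self, bot_eq_empty, card_empty] at h; exact absurd h (by norm_num)⟩

/-- `V` is (the vertex set of) a partial cube isometrically embedded in `Q_m`:
the distance in the induced subgraph equals the Hamming distance. -/
def IsPC {m : ℕ} (V : Set (Finset (Fin m))) : Prop :=
  ∀ u v : V, ((cubeGraph m).induce V).dist u v = (symmDiff u.1 v.1).card

def Shatters {m : ℕ} (V : Set (Finset (Fin m))) (Y : Finset (Fin m)) : Prop :=
  ∀ Z ⊆ Y, ∃ B ∈ V, B ∩ Y = Z

def VCdimLE {m : ℕ} (V : Set (Finset (Fin m))) (d : ℕ) : Prop :=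
  ∀ Y : Finset (Fin m), Shatters V Y → Y.card ≤ d

inductive PCStep {m : ℕ} : Set (Finset (Fin m)) → Set (Finset (Fin m)) → Prop
  | contract (i : Fin m) (V : Set (Finset (Fin m))) :
      PCStep V ((fun B => B.erase i) '' V)
  | restrictPos (i : Fin m) (V : Set (Finset (Fin m))) :
      PCStep V {B ∈ V | i ∈ B}
  | restrictNeg (i : Fin m) (V : Set (Finset (Fin m))) :
      PCStep V {B ∈ V | i ∉ B}

/-- Partial-cube minor relation: a sequence of contractions and restrictions. -/
def PCMinor {m : ℕ} : Set (Finset (Fin m)) → Set (Finset (Fin m)) → Prop :=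
  Relation.ReflTransGen PCStep

/-- `W` is (the vertex set of) a `k`-dimensional subcube of `Q_m`. -/
def IsCubeFam {m : ℕ} (k : ℕ) (W : Set (Finset (Fin m))) : Prop :=
  ∃ (Y X : Finset (Fin m)), Disjoint Y X ∧ X.card = k ∧
    W = {B | ∃ Z ⊆ X, B = Y ∪ Z}

/-- `G` has the cube `Q_k` as a pc-minor. -/
def HasQMinor {m : ℕ} (V : Set (Finset (Fin m))) (k : ℕ) : Prop :=
  ∃ W, PCMinor V W ∧ IsCubeFam k W

def hdist {m : ℕ} (A B : Finset (Fin m)) : ℕ := (symmDiff A B).card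

def IsConvexIn {m : ℕ} (V S : Set (Finset (Fin m))) : Prop :=
  S ⊆ V ∧ ∀ u ∈ S, ∀ v ∈ S, ∀ x ∈ V, hdist u x + hdist x v = hdist u v → x ∈ S

def convexHullIn {m : ℕ} (V S : Set (Finset (Fin m))) : Set (Finset (Fin m)) :=
  ⋂₀ {T | S ⊆ T ∧ IsConvexIn V T}

def IsGatedIn {m : ℕ} (V S : Set (Finset (Fin m))) : Prop :=
  S ⊆ V ∧ ∀ x ∈ V, ∃ g ∈ S, ∀ y ∈ S, hdist x g + hdist g y = hdist x y

/-- The standardly embedded full subdivision `SK_n` in `Q_n`: singletons and pairs. -/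
def SKset (n : ℕ) : Set (Finset (Fin n)) := {B | B.card = 1 ∨ B.card = 2}

/-- A standardly embedded copy of `SK_n` in `Q_m` along the injection `ι`. -/
def skCopy {m : ℕ} (n : ℕ) (ι : Fin n → Fin m) : Set (Finset (Fin m)) :=
  (fun B => B.image ι) '' SKset n

/-!
Write `S` for the set of original vertices of the subdivision. Convexity of `SK_n` keeps `∅` out
of `G`, and maximality keeps out every singleton `{x}` with `x ∉ S`: otherwise all pairs `{x, s}`
would be vertices and `S ∪ {x}` would span a larger convex subdivision. The heart of the matter
is that every vertex of `G` meets `S`. Granted this, `∅` reaches any vertex `v` geodesically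
through some `{s} ⊆ v`, and a 3-set shattered with the help of `∅` is already shattered by `G`,
with `{s}` for some `s ∈ S` outside it as the empty trace.

To see that every vertex meets `S`, take a vertex `u` that is inclusion-minimal among those
missing `S`. Minimality and the VC bound give vertices `A ∪ {s}` with `A ⊆ u` of every size, and
forbid two of them `A ∪ {s}`, `B ∪ {t}` with `s ≠ t` and `∅ ≠ B ⊆ A ⊊ u`. Hence the vertices
`(u \ {y_s}) ∪ {s}`, `s ∈ S`, have pairwise distinct `y_s`, and for a fixed vertex `B ∪ {s₀}`
with `|B| = 2` every `y_s` with `s ≠ s₀` lies in `B`; so `|S| ≤ 3`.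
-/

open SimpleGraph

lemma exists_subset_card_eq_of_forall_erase {α : Type*} [DecidableEq α] {p : Finset α → Prop}
    {u : Finset α} (hu : p u) (h : ∀ A ⊆ u, A.Nonempty → p A → ∃ e ∈ A, p (A.erase e))
    {k : ℕ} (hk : k ≤ u.card) : ∃ A ⊆ u, A.card = k ∧ p A := by
  induction hk using Nat.decreasingInduction with
  | self => exact ⟨u, subset_rfl, rfl, hu⟩
  | of_succ k hk ih =>
    obtain ⟨A, hAu, hAc, hA⟩ := ih
    obtain ⟨e, he, hAe⟩ := h A hAu (card_pos.1 (by omega)) hA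
    exact ⟨A.erase e, (erase_subset e A).trans hAu, by rw [card_erase_of_mem he, hAc]; rfl, hAe⟩

section Hypercube

variable {m : ℕ}

lemma hdist_comm (A B : Finset (Fin m)) : hdist A B = hdist B A := by
  simp only [hdist, symmDiff_comm]

lemma hdist_triangle (A B C : Finset (Fin m)) : hdist A C ≤ hdist A B + hdist B C :=
  (card_le_card (symmDiff_triangle A B C)).trans (card_union_le _ _)

lemma hdist_empty_left (A : Finset (Fin m)) : hdist ∅ A = A.card := by
  rw [hdist, ← bot_eq_empty, bot_symmDiff]

lemma cubeGraph_adj_empty_left {A : Finset (Fin m)} : (cubeGraph m).Adj ∅ A ↔ A.card = 1 := by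
  show (symmDiff ∅ A).card = 1 ↔ _
  rw [← bot_eq_empty, bot_symmDiff]

lemma hdist_singleton_add_one {x : Fin m} {A : Finset (Fin m)} (hx : x ∈ A) :
    hdist {x} A + 1 = A.card := by
  have : symmDiff {x} A = A.erase x := by ext; grind [mem_symmDiff]
  rw [hdist, this, card_erase_add_one hx]

lemma disjoint_symmDiff_of_hdist_add_eq {A X B : Finset (Fin m)}
    (h : hdist A X + hdist X B = hdist A B) : Disjoint (symmDiff A X) (symmDiff X B) := by
  have hunion := card_union_add_card_inter (symmDiff A X) (symmDiff X B)
  have htri := card_le_card (symmDiff_triangle A X B)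
  rw [disjoint_iff_inter_eq_empty, ← card_eq_zero]
  simp only [hdist, sup_eq_union] at h htri
  omega

lemma inter_subset_of_hdist_add_eq {A X B : Finset (Fin m)}
    (h : hdist A X + hdist X B = hdist A B) : A ∩ B ⊆ X := by
  intro a ha
  by_contra haX
  rw [mem_inter] at ha
  exact disjoint_left.1 (disjoint_symmDiff_of_hdist_add_eq h)
    (mem_symmDiff.2 (Or.inl ⟨ha.1, haX⟩)) (mem_symmDiff.2 (Or.inr ⟨ha.2, haX⟩))

lemma subset_union_of_hdist_add_eq {A X B : Finset (Fin m)}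
    (h : hdist A X + hdist X B = hdist A B) : X ⊆ A ∪ B := by
  intro a haX
  by_contra hAB
  rw [mem_union, not_or] at hAB
  exact disjoint_left.1 (disjoint_symmDiff_of_hdist_add_eq h)
    (mem_symmDiff.2 (Or.inr ⟨haX, hAB.1⟩)) (mem_symmDiff.2 (Or.inl ⟨haX, hAB.2⟩))

lemma exists_eq_erase_or_eq_insert_of_adj {A B : Finset (Fin m)} (h : (cubeGraph m).Adj A B) :
    ∃ e, (e ∈ A ∧ B = A.erase e) ∨ (e ∉ A ∧ B = insert e A) := by
  obtain ⟨e, he⟩ := card_eq_one.1 h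
  have hB : B = symmDiff A {e} := by rw [← he, symmDiff_symmDiff_cancel_left]
  refine ⟨e, ?_⟩
  by_cases heA : e ∈ A
  · exact Or.inl ⟨heA, by rw [hB]; ext; grind [mem_symmDiff]⟩
  · exact Or.inr ⟨heA, by rw [hB]; ext; grind [mem_symmDiff]⟩

lemma hdist_le_length {W : Set (Finset (Fin m))} {a b : W}
    (p : ((cubeGraph m).induce W).Walk a b) : hdist a.1 b.1 ≤ p.length := by
  induction p with
  | nil => simp [hdist]
  | @cons u v w h q ih =>
    have huv : hdist u.1 v.1 = 1 := h
    have := hdist_triangle u.1 v.1 w.1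
    rw [Walk.length_cons]
    omega

lemma isPC_iff {W : Set (Finset (Fin m))} :
    IsPC W ↔ ∀ a b : W, ∃ p : ((cubeGraph m).induce W).Walk a b, p.length = hdist a.1 b.1 := by
  constructor
  · intro hW a b
    by_cases hab : a = b
    · subst hab
      exact ⟨Walk.nil, by simp [hdist]⟩
    · have hne : ((cubeGraph m).induce W).dist a b ≠ 0 := by
        rw [hW a b, Ne, card_eq_zero, ← bot_eq_empty, symmDiff_eq_bot]
        exact fun h => hab (Subtype.ext h)
      obtain ⟨p, hp⟩ := exists_walk_of_dist_ne_zero hne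
      exact ⟨p, hp.trans (hW a b)⟩
  · intro hW a b
    obtain ⟨p, hp⟩ := hW a b
    obtain ⟨q, hq⟩ := p.reachable.exists_walk_length_eq_dist
    have hle := dist_le p
    have hge := hdist_le_length q
    simp only [hdist] at hp hq hge ⊢
    omega

end Hypercube

section PartialCube

variable {m : ℕ} {V : Set (Finset (Fin m))}

lemma IsPC.exists_step (hV : IsPC V) {a b : Finset (Fin m)} (ha : a ∈ V) (hb : b ∈ V)
    (hab : a ≠ b) :
    ∃ e, (e ∈ a \ b ∧ a.erase e ∈ V ∧ hdist (a.erase e) b < hdist a b) ∨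
      (e ∈ b \ a ∧ insert e a ∈ V ∧ hdist (insert e a) b < hdist a b) := by
  obtain ⟨p, hp⟩ := isPC_iff.1 hV ⟨a, ha⟩ ⟨b, hb⟩
  cases p with
  | nil => exact absurd rfl hab
  | @cons _ v _ h q =>
    obtain ⟨v, hv⟩ := v
    have hav : hdist a v = 1 := h
    have hvb : hdist v b ≤ q.length := hdist_le_length q
    have htri := hdist_triangle a v b
    rw [Walk.length_cons] at hp
    have hsum : hdist a v + hdist v b = hdist a b := by simp only at hp; omega
    obtain ⟨e, ⟨heA, rfl⟩ | ⟨heA, rfl⟩⟩ := exists_eq_erase_or_eq_insert_of_adj (show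
      (cubeGraph m).Adj a v from h)
    · have heb : e ∉ b := fun heb => by
        simpa using inter_subset_of_hdist_add_eq hsum (mem_inter.2 ⟨heA, heb⟩)
      exact ⟨e, Or.inl ⟨mem_sdiff.2 ⟨heA, heb⟩, hv, by simp only at hp; omega⟩⟩
    · have heb : e ∈ b := by
        simpa [heA] using subset_union_of_hdist_add_eq hsum (mem_insert_self e a)
      exact ⟨e, Or.inr ⟨mem_sdiff.2 ⟨heb, heA⟩, hv, by simp only at hp; omega⟩⟩

lemma IsPC.pair_mem (hV : IsPC V) (hemp : ∅ ∉ V) {x a : Fin m} (hx : {x} ∈ V) (ha : {a} ∈ V)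
    (hxa : x ≠ a) : {x, a} ∈ V := by
  obtain ⟨e, ⟨he, hV', -⟩ | ⟨he, hV', -⟩⟩ := hV.exists_step hx ha (by simpa using hxa)
  · rw [mem_sdiff, mem_singleton] at he
    rw [he.1, erase_singleton] at hV'
    exact absurd hV' hemp
  · rw [mem_sdiff, mem_singleton] at he
    rwa [he.1, pair_comm] at hV'

theorem IsPC.induction_toward (hV : IsPC V) {b : Finset (Fin m)} (hb : b ∈ V)
    {P : Finset (Fin m) → Prop}
    (herase : ∀ w ∈ V, P w → ∀ e ∈ w \ b, w.erase e ∈ V → P (w.erase e))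
    (hinsert : ∀ w ∈ V, P w → ∀ e ∈ b \ w, insert e w ∈ V → P (insert e w))
    {a : Finset (Fin m)} (ha : a ∈ V) (hPa : P a) : P b := by
  induction hd : hdist a b using Nat.strong_induction_on generalizing a with
  | _ d ih =>
    by_cases hab : a = b
    · exact hab ▸ hPa
    obtain ⟨e, ⟨he, hV', hlt⟩ | ⟨he, hV', hlt⟩⟩ := hV.exists_step ha hb hab
    · exact ih _ (hd ▸ hlt) hV' (herase a ha hPa e he hV') rfl
    · exact ih _ (hd ▸ hlt) hV' (hinsert a ha hPa e he hV') rfl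

lemma exists_walk_of_subset {W : Set (Finset (Fin m))} (hVW : V ⊆ W) {a b : Finset (Fin m)}
    {ha : a ∈ V} {hb : b ∈ V} (p : ((cubeGraph m).induce V).Walk ⟨a, ha⟩ ⟨b, hb⟩) :
    ∃ q : ((cubeGraph m).induce W).Walk ⟨a, hVW ha⟩ ⟨b, hVW hb⟩, q.length = p.length :=
  ⟨(p.map ((cubeGraph m).induceHomOfLE hVW).toHom).copy rfl rfl,
    (Walk.length_copy _ _ _).trans (Walk.length_map _ _)⟩

theorem IsPC.insert_empty (hV : IsPC V) (h : ∀ v ∈ V, ∃ x ∈ v, {x} ∈ V) :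
    IsPC (insert ∅ V) := by
  rw [isPC_iff] at hV ⊢
  have hfrom : ∀ v (hv : v ∈ V), ∃ p : ((cubeGraph m).induce (insert ∅ V)).Walk
      ⟨∅, Set.mem_insert _ _⟩ ⟨v, Set.mem_insert_of_mem _ hv⟩, p.length = hdist ∅ v := by
    intro v hv
    obtain ⟨x, hxv, hx⟩ := h v hv
    obtain ⟨p, hp⟩ := hV ⟨{x}, hx⟩ ⟨v, hv⟩
    obtain ⟨q, hq⟩ := exists_walk_of_subset (Set.subset_insert ∅ V) p
    have hadj : ((cubeGraph m).induce (insert ∅ V)).Adj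
        ⟨∅, Set.mem_insert _ _⟩ ⟨{x}, Set.mem_insert_of_mem _ hx⟩ :=
      cubeGraph_adj_empty_left.2 (card_singleton x)
    refine ⟨.cons hadj q, ?_⟩
    rw [Walk.length_cons, hq, hp, hdist_empty_left, ← hdist_singleton_add_one hxv]
  rintro ⟨a, ha | ha⟩ ⟨b, hb | hb⟩
  · subst ha hb
    exact ⟨.nil, by simp [hdist]⟩
  · subst ha
    exact hfrom b hb
  · subst hb
    obtain ⟨p, hp⟩ := hfrom a ha
    exact ⟨p.reverse, by rw [Walk.length_reverse, hp, hdist_comm]⟩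
  · obtain ⟨p, hp⟩ := hV ⟨a, ha⟩ ⟨b, hb⟩
    obtain ⟨q, hq⟩ := exists_walk_of_subset (Set.subset_insert ∅ V) p
    exact ⟨q, hq.trans hp⟩

end PartialCube

section VCDimension

variable {m : ℕ} {V : Set (Finset (Fin m))}

lemma Shatters.mono {Y Y' : Finset (Fin m)} (h : Shatters V Y) (hY : Y' ⊆ Y) :
    Shatters V Y' := by
  intro Z hZ
  obtain ⟨B, hB, hBZ⟩ := h Z (hZ.trans hY)
  refine ⟨B, hB, ?_⟩
  rw [← inter_eq_right.2 hY, ← inter_assoc, hBZ, inter_eq_left.2 hZ]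

lemma shatters_triple {p q r : Fin m}
    (h : ∀ a b c : Bool, ∃ B ∈ V, (p ∈ B ↔ a) ∧ (q ∈ B ↔ b) ∧ (r ∈ B ↔ c)) :
    Shatters V {p, q, r} := by
  intro Z hZ
  obtain ⟨B, hB, hp, hq, hr⟩ := h (decide (p ∈ Z)) (decide (q ∈ Z)) (decide (r ∈ Z))
  simp only [decide_eq_true_eq] at hp hq hr
  refine ⟨B, hB, ext fun t => ?_⟩
  have ht := @hZ t
  simp only [mem_inter, mem_insert, mem_singleton] at ht ⊢
  constructor
  · rintro ⟨htB, rfl | rfl | rfl⟩ <;> tauto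
  · intro htZ
    rcases ht htZ with rfl | rfl | rfl <;> tauto

lemma VCdimLE.insert_empty {d : ℕ} (hvc : VCdimLE V d)
    (h : ∀ Y : Finset (Fin m), Y.card = d + 1 → ∃ B ∈ V, Disjoint B Y) :
    VCdimLE (insert ∅ V) d := by
  intro Y hY
  by_contra! hlt
  obtain ⟨Y', hY'Y, hcard⟩ := exists_subset_card_eq (show d + 1 ≤ Y.card by omega)
  have hsh : Shatters V Y' := by
    intro Z hZ
    obtain ⟨B, hB | hB, hBZ⟩ := hY.mono hY'Y Z hZ
    · obtain ⟨B', hB', hdisj⟩ := h Y' hcard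
      rw [hB, empty_inter] at hBZ
      exact ⟨B', hB', hBZ ▸ disjoint_iff_inter_eq_empty.1 hdisj⟩
    · exact ⟨B, hB, hBZ⟩
  have := hvc Y' hsh
  omega

lemma mem_of_forall_pair_mem {S w : Finset (Fin m)}
    (hpair : ∀ a ∈ S, ∀ b ∈ S, ({a, b} : Finset (Fin m)) ∈ V)
    (hwS : w ⊆ S) (hne : w.Nonempty) (h2 : w.card ≤ 2) : w ∈ V := by
  obtain h1 | h2 : w.card = 1 ∨ w.card = 2 := by have := hne.card_pos; omega
  · obtain ⟨a, rfl⟩ := card_eq_one.1 h1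
    have ha := hwS (mem_singleton_self a)
    simpa using hpair a ha a ha
  · obtain ⟨a, b, -, rfl⟩ := card_eq_two.1 h2
    exact hpair a (hwS (by simp)) b (hwS (by simp))

/-- A 3-subset of `S` inside `B` would be shattered: its other subsets are vertices, up to the
empty one, which is the trace of `{d}` for a fourth point `d ∈ S`. -/
theorem VCdimLE.card_inter_le_two (hvc : VCdimLE V 2) {S : Finset (Fin m)} (hS : 4 ≤ S.card)
    (hpair : ∀ a ∈ S, ∀ b ∈ S, ({a, b} : Finset (Fin m)) ∈ V) {B : Finset (Fin m)}
    (hB : B ∈ V) : (B ∩ S).card ≤ 2 := by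
  by_contra! h
  obtain ⟨Y, hY, hYc⟩ := exists_subset_card_eq (show 3 ≤ (B ∩ S).card by omega)
  obtain ⟨d, hdS, hdY⟩ := exists_mem_notMem_of_card_lt_card (show Y.card < S.card by omega)
  have hsh : Shatters V Y := by
    intro Z hZ
    by_cases hZY : Z = Y
    · rw [hZY]
      exact ⟨B, hB, inter_eq_right.2 (hY.trans inter_subset_left)⟩
    rcases Z.eq_empty_or_nonempty with rfl | hZne
    · exact ⟨{d}, mem_of_forall_pair_mem hpair (by simpa) (by simp) (by simp),
        singleton_inter_of_notMem hdY⟩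
    · have hZc : Z.card < Y.card := card_lt_card (ssubset_of_subset_of_ne hZ hZY)
      exact ⟨Z, mem_of_forall_pair_mem hpair (hZ.trans (hY.trans inter_subset_right)) hZne
        (by omega), inter_eq_left.2 hZ⟩
  have := hvc Y hsh
  omega

end VCDimension

section Subdivision

variable {m n : ℕ} {V : Set (Finset (Fin m))} {ι : Fin n → Fin m}

lemma mem_skCopy_iff (hι : Function.Injective ι) {w : Finset (Fin m)} :
    w ∈ skCopy n ι ↔ w ⊆ univ.image ι ∧ w.Nonempty ∧ w.card ≤ 2 := by
  have hcard : (w.card = 1 ∨ w.card = 2) ↔ w.Nonempty ∧ w.card ≤ 2 := by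
    rw [← card_pos]; omega
  constructor
  · rintro ⟨B, hB, rfl⟩
    rw [← hcard, card_image_of_injective B hι]
    exact ⟨image_subset_image (subset_univ B), hB⟩
  · rintro ⟨hw, hw'⟩
    obtain ⟨B, -, rfl⟩ := subset_image_iff.1 hw
    rw [← hcard, card_image_of_injective B hι] at hw'
    exact ⟨B, hw', rfl⟩

lemma pair_mem_skCopy (hι : Function.Injective ι) {a b : Fin m} (ha : a ∈ univ.image ι)
    (hb : b ∈ univ.image ι) : {a, b} ∈ skCopy n ι :=
  (mem_skCopy_iff hι).2 ⟨insert_subset ha (singleton_subset_iff.2 hb), insert_nonempty _ _,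
    card_le_two⟩

lemma singleton_mem_skCopy (i : Fin n) : {ι i} ∈ skCopy n ι :=
  ⟨{i}, Or.inl (card_singleton i), image_singleton ι i⟩

lemma empty_notMem_of_isConvexIn_skCopy (hn : 2 ≤ n) (hι : Function.Injective ι)
    (hconv : IsConvexIn V (skCopy n ι)) : ∅ ∉ V := by
  intro hemp
  have hne : ι ⟨0, by omega⟩ ≠ ι ⟨1, by omega⟩ := hι.ne (by simp [Fin.ext_iff])
  have hmem := hconv.2 _ (singleton_mem_skCopy _) _ (singleton_mem_skCopy _) ∅ hemp
    (by rw [hdist, hdist, hdist, ← bot_eq_empty, symmDiff_bot, bot_symmDiff,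
      (disjoint_singleton.2 hne).symmDiff_eq_sup, sup_eq_union, ← insert_eq, card_pair hne,
      card_singleton, card_singleton])
  exact not_nonempty_empty ((mem_skCopy_iff hι).1 hmem).2.1

theorem isConvexIn_skCopy (hvc : VCdimLE V 2) (hemp : ∅ ∉ V) (hn : 4 ≤ n)
    (hι : Function.Injective ι)
    (hpair : ∀ a ∈ univ.image ι, ∀ b ∈ univ.image ι, ({a, b} : Finset (Fin m)) ∈ V) :
    IsConvexIn V (skCopy n ι) := by
  have hS : 4 ≤ (univ.image ι).card := by
    rwa [card_image_of_injective _ hι, card_univ, Fintype.card_fin]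
  refine ⟨fun w hw => ?_, fun u hu v hv x hx hux => ?_⟩
  · obtain ⟨hwS, hne, h2⟩ := (mem_skCopy_iff hι).1 hw
    exact mem_of_forall_pair_mem hpair hwS hne h2
  · rw [mem_skCopy_iff hι] at hu hv ⊢
    have hxS : x ⊆ univ.image ι :=
      (subset_union_of_hdist_add_eq hux).trans (union_subset hu.1 hv.1)
    refine ⟨hxS, nonempty_iff_ne_empty.2 (by rintro rfl; exact hemp hx), ?_⟩
    simpa [inter_eq_left.2 hxS] using hvc.card_inter_le_two hS hpair hx

/-- A singleton `{x}` with `x` outside the subdivision would extend it to a convex `SK_{n+1}`. -/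
theorem mem_image_of_singleton_mem (hV : IsPC V) (hvc : VCdimLE V 2) (hn : 4 ≤ n)
    (hι : Function.Injective ι) (hconv : IsConvexIn V (skCopy n ι))
    (hmax : ∀ (n' : ℕ) (ι' : Fin n' → Fin m), Function.Injective ι' →
      skCopy n' ι' ⊆ V → IsConvexIn V (skCopy n' ι') → ¬ (skCopy n ι ⊂ skCopy n' ι'))
    {x : Fin m} (hx : {x} ∈ V) : x ∈ univ.image ι := by
  by_contra hxS
  have hemp := empty_notMem_of_isConvexIn_skCopy (by omega) hι hconv
  have hpair : ∀ a ∈ univ.image ι, ∀ b ∈ univ.image ι, ({a, b} : Finset (Fin m)) ∈ V :=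
    fun a ha b hb => hconv.1 (pair_mem_skCopy hι ha hb)
  have hxa : ∀ a ∈ univ.image ι, ({x, a} : Finset (Fin m)) ∈ V := fun a ha =>
    hV.pair_mem hemp hx (by simpa using hpair a ha a ha) (fun h => hxS (h ▸ ha))
  let ι' : Fin (n + 1) → Fin m := Fin.cons x ι
  have hι' : Function.Injective ι' := Fin.cons_injective_iff.2 ⟨by simpa using hxS, hι⟩
  have himage : univ.image ι' = insert x (univ.image ι) := by
    ext; simp [ι', Fin.exists_fin_succ, eq_comm]
  have hconv' : IsConvexIn V (skCopy (n + 1) ι') := by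
    refine isConvexIn_skCopy hvc hemp (by omega) hι' ?_
    rw [himage]
    intro a ha b hb
    rcases mem_insert.1 ha with rfl | haS <;> rcases mem_insert.1 hb with rfl | hbS
    · simpa using hx
    · exact hxa b hbS
    · exact pair_comm a _ ▸ hxa a haS
    · exact hpair a haS b hbS
  refine hmax (n + 1) ι' hι' hconv'.1 hconv' ⟨fun w hw => ?_, fun h => hxS ?_⟩
  · rw [mem_skCopy_iff hι] at hw
    rw [mem_skCopy_iff hι', himage]
    exact ⟨hw.1.trans (subset_insert _ _), hw.2⟩
  · have hx' : {x} ∈ skCopy (n + 1) ι' := (mem_skCopy_iff hι').2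
      ⟨by simp [himage], singleton_nonempty x, by simp⟩
    simpa using ((mem_skCopy_iff hι).1 (h hx')).1

end Subdivision

section MinimalAvoidingVertex

variable {m : ℕ} {V : Set (Finset (Fin m))} {S u : Finset (Fin m)}

lemma insert_mem_of_minimal (hV : IsPC V) (hu : Minimal (fun w => w ∈ V ∧ Disjoint w S) u)
    {a : Fin m} (ha : a ∈ S) (haV : {a} ∈ V) : insert a u ∈ V := by
  have hau : a ∉ u := disjoint_right.1 hu.1.2 ha
  obtain ⟨e, ⟨he, hV', -⟩ | ⟨he, hV', -⟩⟩ :=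
    hV.exists_step hu.1.1 haV (fun h => hau (h ▸ mem_singleton_self a))
  · exact absurd ⟨hV', hu.1.2.mono_left (erase_subset _ _)⟩
      (hu.not_prop_of_lt (erase_ssubset (mem_sdiff.1 he).1))
  · rwa [mem_singleton.1 (mem_sdiff.1 he).1] at hV'

theorem notMem_of_minimal_of_two_mem (hV : IsPC V) (hvc : VCdimLE V 2) (hS : 3 ≤ S.card)
    (hpair : ∀ a ∈ S, ∀ b ∈ S, ({a, b} : Finset (Fin m)) ∈ V)
    (hu : Minimal (fun w => w ∈ V ∧ Disjoint w S) u) {B : Finset (Fin m)} (hB : B ∈ V)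
    {a b z : Fin m} (ha : a ∈ S) (hb : b ∈ S) (hab : a ≠ b) (haB : a ∈ B) (hbB : b ∈ B)
    (hz : z ∈ u) : z ∉ B := by
  intro hzB
  have hau : a ∉ u := disjoint_right.1 hu.1.2 ha
  have hbu : b ∉ u := disjoint_right.1 hu.1.2 hb
  have hza : z ≠ a := fun h => hau (h ▸ hz)
  have hzb : z ≠ b := fun h => hbu (h ▸ hz)
  obtain ⟨d, hdS, hd⟩ := exists_mem_notMem_of_card_lt_card (s := {a, b}) (t := S)
    (by have := card_le_two (a := a) (b := b); omega)
  have hsing : ∀ c ∈ S, {c} ∈ V := fun c hc => by simpa using hpair c hc c hc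
  have hins : ∀ c ∈ S, insert c u ∈ V := fun c hc => insert_mem_of_minimal hV hu hc (hsing c hc)
  have hzd : z ≠ d := fun h => disjoint_right.1 hu.1.2 hdS (h ▸ hz)
  simp only [mem_insert, mem_singleton, not_or] at hd
  have hshat : Shatters V {a, b, z} := by
    refine shatters_triple fun x y w => ?_
    cases x <;> cases y <;> cases w
    · exact ⟨{d}, hsing d hdS, by simp [Ne.symm hd.1, Ne.symm hd.2, hzd]⟩
    · exact ⟨u, hu.1.1, by simp [hau, hbu, hz]⟩
    · exact ⟨{b}, hsing b hb, by simp [hab, hzb]⟩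
    · exact ⟨insert b u, hins b hb, by simp [hab, hau, hz]⟩
    · exact ⟨{a}, hsing a ha, by simp [Ne.symm hab, hza]⟩
    · exact ⟨insert a u, hins a ha, by simp [Ne.symm hab, hbu, hz]⟩
    · exact ⟨{a, b}, hpair a ha b hb, by simp [hza, hzb]⟩
    · exact ⟨B, hB, by simp [haB, hbB, hzB]⟩
  have := hvc _ hshat
  rw [card_eq_three.2 ⟨a, b, z, hab, hza.symm, hzb.symm, rfl⟩] at this
  omega

theorem exists_insert_mem_of_minimal (hV : IsPC V) (hvc : VCdimLE V 2) (hS : 3 ≤ S.card)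
    (hpair : ∀ a ∈ S, ∀ b ∈ S, ({a, b} : Finset (Fin m)) ∈ V)
    (hu : Minimal (fun w => w ∈ V ∧ Disjoint w S) u) {a b : Fin m} (ha : a ∈ S) (hb : b ∈ S)
    (hab : a ≠ b) {k : ℕ} (hk : k ≤ u.card) : ∃ A ⊆ u, A.card = k ∧ insert a A ∈ V := by
  refine exists_subset_card_eq_of_forall_erase (p := fun A => insert a A ∈ V)
    (insert_mem_of_minimal hV hu ha (by simpa using hpair a ha a ha)) ?_ hk
  intro A hAu hAne hAV
  have hbA : b ∉ insert a A := by
    rw [mem_insert, not_or]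
    exact ⟨Ne.symm hab, fun h => disjoint_right.1 hu.1.2 hb (hAu h)⟩
  obtain ⟨e, ⟨he, hV', -⟩ | ⟨he, hV', -⟩⟩ :=
    hV.exists_step hAV (hpair a ha b hb) (fun h => hbA (h ▸ by simp))
  · simp only [mem_sdiff, mem_insert, mem_singleton, not_or] at he
    obtain ⟨heA | heA, hea, -⟩ := he
    · exact absurd heA hea
    · exact ⟨e, heA, by rwa [erase_insert_of_ne (Ne.symm hea)] at hV'⟩
  · obtain ⟨z, hz⟩ := hAne
    simp only [mem_sdiff, mem_insert, mem_singleton, not_or] at he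
    obtain ⟨rfl | rfl, hea, -⟩ := he
    · exact absurd rfl hea
    exact absurd (by simp [hz]) (notMem_of_minimal_of_two_mem hV hvc hS hpair hu hV' ha hb
      hab (by simp) (by simp) (hAu hz))

/-- Along a geodesic from `insert a A` to `insert b B`, the vertices keep `a`, avoid `b`, and
stay between `B` and `insert a A`: dropping `a` would give a vertex inside `A ⊂ u` avoiding `S`,
and adding `b` a vertex containing `a`, `b` and a point of `B ⊆ u`. -/
theorem insert_notMem_of_minimal (hV : IsPC V) (hvc : VCdimLE V 2) (hS : 3 ≤ S.card)
    (hpair : ∀ a ∈ S, ∀ b ∈ S, ({a, b} : Finset (Fin m)) ∈ V)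
    (hu : Minimal (fun w => w ∈ V ∧ Disjoint w S) u) {a b : Fin m} (ha : a ∈ S) (hb : b ∈ S)
    (hab : a ≠ b) {A B : Finset (Fin m)} (hAu : A ⊂ u) (hBA : B ⊆ A) (hB : B.Nonempty)
    (hAV : insert a A ∈ V) : insert b B ∉ V := by
  intro hBV
  have hAS : Disjoint A S := hu.1.2.mono_left hAu.1
  have hbA : b ∉ A := disjoint_right.1 hAS hb
  refine (hV.induction_toward hBV (P := fun w => a ∈ w ∧ b ∉ w ∧ B ⊆ w ∧ w ⊆ insert a A)
    ?_ ?_ hAV ⟨mem_insert_self a A, by simp [Ne.symm hab, hbA],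
      hBA.trans (subset_insert a A), subset_rfl⟩).2.1 (mem_insert_self b B)
  · rintro w - ⟨haw, hbw, hBw, hwA⟩ e he hwe
    simp only [mem_sdiff, mem_insert, not_or] at he
    obtain ⟨hew, -, heB⟩ := he
    by_cases hea : e = a
    · subst hea
      have hwu : w.erase e ⊂ u := by
        refine Finset.ssubset_of_subset_of_ssubset (fun x hx => ?_) hAu
        have := hwA (mem_of_mem_erase hx)
        rw [mem_insert] at this
        exact this.resolve_left (ne_of_mem_erase hx)
      exact absurd ⟨hwe, hu.1.2.mono_left hwu.1⟩ (hu.not_prop_of_lt hwu)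
    · exact ⟨mem_erase.2 ⟨Ne.symm hea, haw⟩, fun h => hbw (mem_of_mem_erase h),
        fun x hx => mem_erase.2 ⟨fun h => heB (h ▸ hx), hBw hx⟩,
        (erase_subset e w).trans hwA⟩
  · rintro w - ⟨haw, hbw, hBw, hwA⟩ e he hwe
    rcases mem_insert.1 (mem_sdiff.1 he).1 with rfl | heB
    · obtain ⟨z, hz⟩ := hB
      exact absurd (mem_insert_of_mem (hBw hz)) (notMem_of_minimal_of_two_mem hV hvc hS hpair
        hu hwe ha hb hab (mem_insert_of_mem haw) (mem_insert_self e w) (hAu.1 (hBA hz)))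
    · have heb : e ≠ b := fun h => hbA (h ▸ hBA heB)
      exact ⟨mem_insert_of_mem haw, by simp [Ne.symm heb, hbw],
        hBw.trans (subset_insert e w), insert_subset (mem_insert_of_mem (hBA heB)) hwA⟩

lemma exists_insert_erase_mem_of_minimal (hV : IsPC V) (hvc : VCdimLE V 2) (hS : 3 ≤ S.card)
    (hpair : ∀ a ∈ S, ∀ b ∈ S, ({a, b} : Finset (Fin m)) ∈ V)
    (hu : Minimal (fun w => w ∈ V ∧ Disjoint w S) u) (hu1 : 1 ≤ u.card) {a : Fin m}
    (ha : a ∈ S) : ∃ y ∈ u, insert a (u.erase y) ∈ V := by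
  obtain ⟨b, hb, hba⟩ := exists_mem_ne (by omega : 1 < S.card) a
  obtain ⟨A, hAu, hAc, hAV⟩ := exists_insert_mem_of_minimal hV hvc hS hpair hu ha hb hba.symm
    (k := u.card - 1) (by omega)
  obtain ⟨y, hy, hAy⟩ :=
    ssubset_iff_exists_subset_erase.1 (ssubset_of_subset_of_ne hAu (by rintro rfl; omega))
  refine ⟨y, hy, ?_⟩
  rwa [← eq_of_subset_of_card_le hAy (by rw [card_erase_of_mem hy, hAc])]

theorem not_disjoint_of_mem (hV : IsPC V) (hvc : VCdimLE V 2) (hS : 4 ≤ S.card)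
    (hpair : ∀ a ∈ S, ∀ b ∈ S, ({a, b} : Finset (Fin m)) ∈ V) (hemp : ∅ ∉ V)
    (hsing : ∀ x, {x} ∈ V → x ∈ S) {v : Finset (Fin m)} (hv : v ∈ V) : ¬ Disjoint v S := by
  intro hvS
  obtain ⟨u, -, hu⟩ :=
    exists_minimal_le_of_wellFoundedLT (fun w => w ∈ V ∧ Disjoint w S) v ⟨hv, hvS⟩
  have hS3 : 3 ≤ S.card := by omega
  have hu2 : 2 ≤ u.card := by
    by_contra! h
    obtain h0 | h1 : u.card = 0 ∨ u.card = 1 := by omega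
    · exact hemp (card_eq_zero.1 h0 ▸ hu.1.1)
    · obtain ⟨x, hx⟩ := card_eq_one.1 h1
      exact disjoint_left.1 hu.1.2 (hx ▸ mem_singleton_self x) (hsing x (hx ▸ hu.1.1))
  obtain ⟨a₀, ha₀⟩ : S.Nonempty := card_pos.1 (by omega)
  obtain ⟨b₀, hb₀, hba₀⟩ := exists_mem_ne (by omega : 1 < S.card) a₀
  obtain ⟨B, hBu, hBc, hBV⟩ :=
    exists_insert_mem_of_minimal hV hvc hS3 hpair hu ha₀ hb₀ hba₀.symm hu2
  choose! y hyu hyV using fun a (ha : a ∈ S) =>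
    exists_insert_erase_mem_of_minimal hV hvc hS3 hpair hu (by omega) ha
  have hmaps : Set.MapsTo y (S.erase a₀) B := by
    intro a ha
    rw [mem_coe, mem_erase] at ha
    by_contra hyB
    exact insert_notMem_of_minimal hV hvc hS3 hpair hu ha.2 ha₀ ha.1
      (erase_ssubset (hyu a ha.2)) (fun x hx => mem_erase.2 ⟨fun h => hyB (h ▸ hx), hBu hx⟩)
      (card_pos.1 (by omega)) (hyV a ha.2) hBV
  have hinj : Set.InjOn y (S.erase a₀) := by
    intro a ha b hb hab
    rw [mem_coe] at ha hb
    by_contra hne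
    have hyu' := hyu a (mem_of_mem_erase ha)
    exact insert_notMem_of_minimal hV hvc hS3 hpair hu (mem_of_mem_erase ha)
      (mem_of_mem_erase hb) hne (erase_ssubset hyu') subset_rfl
      (card_pos.1 (by rw [card_erase_of_mem hyu']; omega)) (hyV a (mem_of_mem_erase ha))
      (hab ▸ hyV b (mem_of_mem_erase hb))
  have := card_le_card_of_injOn y hmaps hinj
  rw [card_erase_of_mem ha₀, hBc] at this
  omega

end MinimalAvoidingVertex

theorem stmt17_general (m n : ℕ) (hn : 4 ≤ n) (V : Set (Finset (Fin m)))
    (iota : Fin n → Fin m) (hiota : Function.Injective iota)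
    (hV : IsPC V) (hvc : VCdimLE V 2)
    (hconv : IsConvexIn V (skCopy n iota))
    (hmax : ∀ (n' : ℕ) (iota' : Fin n' → Fin m), Function.Injective iota' →
      skCopy n' iota' ⊆ V → IsConvexIn V (skCopy n' iota') →
      ¬ (skCopy n iota ⊂ skCopy n' iota')) :
    IsPC (insert (∅ : Finset (Fin m)) V) ∧
      VCdimLE (insert (∅ : Finset (Fin m)) V) 2 ∧
      (∀ B ∈ V, (cubeGraph m).Adj ∅ B ↔ ∃ j : Fin n, B = {iota j}) := by
  set S := univ.image iota
  have hS : S.card = n := by rw [card_image_of_injective _ hiota, card_univ, Fintype.card_fin]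
  have hpair : ∀ a ∈ S, ∀ b ∈ S, ({a, b} : Finset (Fin m)) ∈ V :=
    fun a ha b hb => hconv.1 (pair_mem_skCopy hiota ha hb)
  have hemp : ∅ ∉ V := empty_notMem_of_isConvexIn_skCopy (by omega) hiota hconv
  have hsing : ∀ x, {x} ∈ V → x ∈ S :=
    fun x hx => mem_image_of_singleton_mem hV hvc hn hiota hconv hmax hx
  refine ⟨hV.insert_empty fun v hv => ?_, hvc.insert_empty fun Y hY => ?_, fun B hB => ?_⟩
  · obtain ⟨x, hxv, hxS⟩ :=
      not_disjoint_iff.1 (not_disjoint_of_mem hV hvc (hS ▸ hn) hpair hemp hsing hv)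
    exact ⟨x, hxv, by simpa using hpair x hxS x hxS⟩
  · obtain ⟨a, haS, haY⟩ := exists_mem_notMem_of_card_lt_card (show Y.card < S.card by omega)
    exact ⟨{a}, by simpa using hpair a haS a haS, disjoint_singleton_left.2 haY⟩
  · rw [cubeGraph_adj_empty_left, card_eq_one]
    constructor
    · rintro ⟨x, rfl⟩
      obtain ⟨j, -, rfl⟩ := mem_image.1 (hsing x hB)
      exact ⟨j, rfl⟩
    · rintro ⟨j, rfl⟩
      exact ⟨_, rfl⟩

/-- The 1-extension of a two-dimensional partial cube along a maximal convex
full subdivision `SK_n` (`n ≥ 4`, standardly embedded via `iota`) is again a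
two-dimensional partial cube, and `∅` is adjacent exactly to the `n` original
vertices of the subdivision. -/
theorem stmt17 (m n : ℕ) (hn : 4 ≤ n) (V : Set (Finset (Fin m)))
    (iota : Fin n → Fin m) (hiota : Function.Injective iota)
    (hV : IsPC V) (hvc : VCdimLE V 2)
    (hsub : skCopy n iota ⊆ V) (hconv : IsConvexIn V (skCopy n iota))
    (hmax : ∀ (n' : ℕ) (iota' : Fin n' → Fin m), Function.Injective iota' →
      skCopy n' iota' ⊆ V → IsConvexIn V (skCopy n' iota') →
      ¬ (skCopy n iota ⊂ skCopy n' iota')) :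
    IsPC (insert (∅ : Finset (Fin m)) V) ∧
      VCdimLE (insert (∅ : Finset (Fin m)) V) 2 ∧
      (∀ B ∈ V, (cubeGraph m).Adj ∅ B ↔ ∃ j : Fin n, B = {iota j}) :=
  stmt17_general m n hn V iota hiota hV hvc hconv hmax
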